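/- Irrational rotation numbers are attained at a single parameter: if θ₁, θ₂ ∈ ℝ satisfy ρ(θ₁) = ρ(θ₂) and this common value is irrational, then θ₁ = θ₂. Equivalently, for every irrational t the fiber ρ^{-1}(t) is a single point. -/

import Mathlib

/-!
The rotation number `ρ(θ)` is the translation number `τ` of `A_θ` viewed as a degree-one circle
lift. Since `A_{θ+ε} = A_θ + ε`, it suffices to show that `f + ε ≤ g` forces `τ f < τ g` when `τ f`
is irrational. If `τ f = τ g = t`, Dirichlet gives `q > 0` with `q t` within `ε` of an integer `m`,
and `q t ≠ m`. If `q t < m`, a point with `f^q x = x + q t` gives `g^q x > x + m`, so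
`q t = τ (g^q) ≥ m`; if `q t > m`, the same argument with the roles of `f` and `g` exchanged.
For existence, `τ (A_θ)` is continuous in `θ`, being the uniform limit of `A_θ^n(0) / n`,
and stays within `1` of `θ`; the intermediate value theorem finishes.
-/

open Filter Topology

/-- The Arnold (standard) map lift restricted to the real line:
`A_θ(x) = x + θ + sin(2πx)/(2π)`. -/
noncomputable def arnoldR (θ : ℝ) (x : ℝ) : ℝ :=
  x + θ + Real.sin (2 * Real.pi * x) / (2 * Real.pi)

theorem exists_pos_nat_abs_mul_sub_int_lt (ξ : ℝ) {ε : ℝ} (hε : 0 < ε) :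
    ∃ q : ℕ, 0 < q ∧ ∃ m : ℤ, |q * ξ - m| < ε := by
  obtain ⟨n, hn⟩ := exists_nat_one_div_lt hε
  obtain ⟨q, hq, -, hqξ⟩ := Real.exists_nat_abs_mul_sub_round_le ξ n.succ_pos
  refine ⟨q, hq, round (q * ξ), hqξ.trans_lt (lt_of_le_of_lt ?_ hn)⟩
  gcongr
  linarith

namespace CircleDeg1Lift

theorem pow_apply_add_le_of_add_le {f g : CircleDeg1Lift} {ε : ℝ} (hε : 0 ≤ ε)
    (h : ∀ x, f x + ε ≤ g x) {n : ℕ} (hn : n ≠ 0) (x : ℝ) : (f ^ n) x + ε ≤ (g ^ n) x := by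
  induction n with
  | zero => exact absurd rfl hn
  | succ n ih =>
    rcases eq_or_ne n 0 with rfl | hn₀
    · simpa using h x
    · rw [pow_succ', pow_succ', mul_apply, mul_apply]
      calc f ((f ^ n) x) + ε ≤ g ((f ^ n) x) := h _
        _ ≤ g ((g ^ n) x) := g.monotone (le_of_add_le_of_nonneg_left (ih hn₀) hε)

theorem translationNumber_lt_of_add_le {f g : CircleDeg1Lift} (hf : Continuous f)
    (hg : Continuous g) {ε : ℝ} (hε : 0 < ε) (h : ∀ x, f x + ε ≤ g x)
    (hirr : Irrational f.translationNumber) : f.translationNumber < g.translationNumber := by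
  refine (translationNumber_mono fun x => by linarith [h x]).lt_of_ne fun heq => ?_
  obtain ⟨q, hq, m, hqm⟩ := exists_pos_nat_abs_mul_sub_int_lt f.translationNumber hε
  have hpow := pow_apply_add_le_of_add_le hε.le h hq.ne'
  rw [abs_lt] at hqm
  rcases lt_or_gt_of_ne ((hirr.natCast_mul hq.ne').ne_int m) with hlt | hgt
  · obtain ⟨x, hx⟩ := (f ^ q).exists_eq_add_translationNumber (f.continuous_pow hf q)
    rw [translationNumber_pow] at hx
    have hm : (m : ℝ) ≤ (g ^ q).translationNumber :=
      le_translationNumber_of_add_int_le _ (x := x) (by linarith [hpow x])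
    rw [translationNumber_pow, ← heq] at hm
    linarith
  · obtain ⟨x, hx⟩ := (g ^ q).exists_eq_add_translationNumber (g.continuous_pow hg q)
    rw [translationNumber_pow, ← heq] at hx
    have hm : (f ^ q).translationNumber ≤ m :=
      translationNumber_le_of_le_add_int _ (x := x) (by linarith [hpow x])
    rw [translationNumber_pow] at hm
    linarith

theorem dist_translationNumber_pow_map_zero_div_le (f : CircleDeg1Lift) {n : ℕ} (hn : 0 < n) :
    dist f.translationNumber ((f ^ n) 0 / n) ≤ 1 / n := by
  have hn' : (0 : ℝ) < n := Nat.cast_pos.2 hn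
  rw [Real.dist_eq, ← mul_div_cancel_left₀ f.translationNumber hn'.ne', ← sub_div, abs_div,
    abs_of_pos hn', ← Real.dist_eq, dist_comm]
  gcongr
  exact f.dist_pow_map_zero_mul_translationNumber_le n

theorem continuous_translationNumber_of_continuous_uncurry {X : Type*} [TopologicalSpace X]
    {F : X → CircleDeg1Lift} (hF : Continuous fun p : X × ℝ => F p.1 p.2) :
    Continuous fun a => (F a).translationNumber := by
  have hpow (n : ℕ) : Continuous fun a => (F a ^ n) 0 := by
    induction n with
    | zero => simpa using continuous_const
    | succ n ih =>
      simp only [pow_succ', mul_apply]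
      exact hF.comp (continuous_id.prodMk ih)
  refine TendstoUniformly.continuous (F := fun (n : ℕ) a => (F a ^ n) 0 / n) (p := atTop) ?_
    (Frequently.of_forall fun n => (hpow n).div_const _)
  rw [Metric.tendstoUniformly_iff]
  intro ε hε
  obtain ⟨N, hN⟩ := exists_nat_one_div_lt hε
  filter_upwards [eventually_gt_atTop N] with n hn a
  calc dist (F a).translationNumber ((F a ^ n) 0 / n) ≤ 1 / n :=
        (F a).dist_translationNumber_pow_map_zero_div_le (N.zero_le.trans_lt hn)
    _ ≤ 1 / (N + 1) := by gcongr; exact_mod_cast hn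
    _ < ε := hN

end CircleDeg1Lift

theorem arnoldR_add_one (θ x : ℝ) : arnoldR θ (x + 1) = arnoldR θ x + 1 := by
  rw [arnoldR, arnoldR, mul_add, mul_one, Real.sin_add_two_pi]
  ring

theorem arnoldR_add_param (θ c x : ℝ) : arnoldR (θ + c) x = arnoldR θ x + c := by
  simp only [arnoldR]
  ring

theorem abs_arnoldR_sub_le (θ x : ℝ) : |arnoldR θ x - (x + θ)| ≤ 1 := by
  have h2π : 1 ≤ 2 * Real.pi := by linarith [Real.pi_gt_three]
  have hpos : 0 < 2 * Real.pi := by positivity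
  rw [arnoldR, add_sub_cancel_left, abs_div, abs_of_pos hpos, div_le_one₀ hpos]
  exact (Real.abs_sin_le_one _).trans h2π

theorem arnoldR_monotone (θ : ℝ) : Monotone (arnoldR θ) := by
  intro x y hxy
  have h2π : 0 < 2 * Real.pi := by positivity
  have hsin : Real.sin (2 * Real.pi * x) - Real.sin (2 * Real.pi * y) ≤ 2 * Real.pi * (y - x) :=
    calc _ ≤ |Real.sin (2 * Real.pi * x) - Real.sin (2 * Real.pi * y)| := le_abs_self _
      _ ≤ |2 * Real.pi * x - 2 * Real.pi * y| := Real.abs_sin_sub_sin_le _ _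
      _ = 2 * Real.pi * (y - x) := by rw [abs_of_nonpos (by nlinarith)]; ring
  have hdiv : Real.sin (2 * Real.pi * x) / (2 * Real.pi) - Real.sin (2 * Real.pi * y) / (2 * Real.pi)
      ≤ y - x := by
    rw [← sub_div, div_le_iff₀ h2π]
    linarith
  simp only [arnoldR]
  linarith

theorem continuous_arnoldR_uncurry : Continuous fun p : ℝ × ℝ => arnoldR p.1 p.2 := by
  unfold arnoldR
  fun_prop

noncomputable def arnoldLift (θ : ℝ) : CircleDeg1Lift :=
  ⟨⟨arnoldR θ, arnoldR_monotone θ⟩, arnoldR_add_one θ⟩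

@[simp]
theorem coe_arnoldLift (θ : ℝ) : ⇑(arnoldLift θ) = arnoldR θ :=
  rfl

theorem tendsto_arnoldR_iterate_div (θ : ℝ) :
    Tendsto (fun n : ℕ => (arnoldR θ)^[n] 0 / n) atTop (𝓝 (arnoldLift θ).translationNumber) := by
  simpa only [CircleDeg1Lift.coe_pow, coe_arnoldLift] using
    (arnoldLift θ).tendsto_translation_number₀

theorem abs_translationNumber_arnoldLift_sub_le (θ : ℝ) :
    |(arnoldLift θ).translationNumber - θ| ≤ 1 := by
  have hbound (x : ℝ) := abs_le.1 (abs_arnoldR_sub_le θ x)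
  rw [abs_le]
  constructor
  · linarith [(arnoldLift θ).le_translationNumber_of_add_le (z := θ - 1)
      fun x => by simp only [coe_arnoldLift]; linarith [hbound x]]
  · linarith [(arnoldLift θ).translationNumber_le_of_le_add (z := θ + 1)
      fun x => by simp only [coe_arnoldLift]; linarith [hbound x]]

theorem surjective_translationNumber_arnoldLift :
    Function.Surjective fun θ => (arnoldLift θ).translationNumber := by
  have hbound (θ : ℝ) := abs_le.1 (abs_translationNumber_arnoldLift_sub_le θ)
  refine (CircleDeg1Lift.continuous_translationNumber_of_continuous_uncurry
    continuous_arnoldR_uncurry).surjective ?_ ?_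
  · exact tendsto_atTop_mono (fun θ => by linarith [hbound θ, id_eq θ])
      (tendsto_atTop_add_const_right _ (-1) tendsto_id)
  · exact tendsto_atBot_mono (fun θ => by linarith [hbound θ, id_eq θ])
      (tendsto_atBot_add_const_right _ 1 tendsto_id)

theorem translationNumber_arnoldLift_lt {θ₁ θ₂ : ℝ} (hθ : θ₁ < θ₂)
    (hirr : Irrational (arnoldLift θ₁).translationNumber) :
    (arnoldLift θ₁).translationNumber < (arnoldLift θ₂).translationNumber := by
  have hcont (θ : ℝ) : Continuous (arnoldLift θ) :=
    continuous_arnoldR_uncurry.comp (Continuous.prodMk_right θ)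
  refine CircleDeg1Lift.translationNumber_lt_of_add_le (hcont θ₁) (hcont θ₂) (sub_pos.2 hθ)
    (fun x => ?_) hirr
  rw [coe_arnoldLift, coe_arnoldLift, ← arnoldR_add_param, add_sub_cancel]

theorem eq_of_translationNumber_arnoldLift_eq {θ₁ θ₂ : ℝ}
    (h : (arnoldLift θ₁).translationNumber = (arnoldLift θ₂).translationNumber)
    (hirr : Irrational (arnoldLift θ₁).translationNumber) : θ₁ = θ₂ := by
  rcases lt_trichotomy θ₁ θ₂ with hlt | heq | hgt
  · exact absurd h (translationNumber_arnoldLift_lt hlt hirr).ne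
  · exact heq
  · exact absurd h (translationNumber_arnoldLift_lt hgt (h ▸ hirr)).ne'

/-- Irrational rotation numbers are attained at a single parameter: if
`ρ(θ₁) = ρ(θ₂)` is irrational then `θ₁ = θ₂`; equivalently, for every irrational `t`
the fiber `ρ⁻¹(t)` is a single point. -/
theorem arnold_irrational_fiber_is_point (ρ : ℝ → ℝ)
    (hρ : ∀ θ x : ℝ,
      Filter.Tendsto (fun n : ℕ => (arnoldR θ)^[n] x / n) Filter.atTop (nhds (ρ θ))) :
    (∀ θ₁ θ₂ : ℝ, ρ θ₁ = ρ θ₂ → Irrational (ρ θ₁) → θ₁ = θ₂) ∧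
    (∀ t : ℝ, Irrational t → ∃! θ : ℝ, ρ θ = t) := by
  obtain rfl : ρ = fun θ => (arnoldLift θ).translationNumber :=
    funext fun θ => tendsto_nhds_unique (hρ θ 0) (tendsto_arnoldR_iterate_div θ)
  have hinj (θ₁ θ₂ : ℝ) := @eq_of_translationNumber_arnoldLift_eq θ₁ θ₂
  refine ⟨hinj, fun t ht => ?_⟩
  obtain ⟨θ, rfl⟩ := surjective_translationNumber_arnoldLift t
  exact ⟨θ, rfl, fun θ' (h : (arnoldLift θ').translationNumber = _) => hinj θ' θ h (h ▸ ht)⟩
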